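/- Let η be a nonzero real number and suppose the kernel of the Burau specialization S_η : B₃ → GL₂(ℝ) is nontrivial and not contained in the center of B₃. Then the Burau specialization S⁴_η : B₄ → GL₃(ℝ) is not injective. -/

import Mathlib

open Matrix
open scoped MatrixGroups

/-- The braid relations on `m` generators. -/
def braidRels (m : ℕ) : Set (FreeGroup (Fin m)) :=
  { r | (∃ i j : Fin m, (i : ℕ) + 1 = (j : ℕ) ∧
          r = FreeGroup.of i * FreeGroup.of j * FreeGroup.of i *
              (FreeGroup.of j * FreeGroup.of i * FreeGroup.of j)⁻¹) ∨
        (∃ i j : Fin m, (i : ℕ) + 2 ≤ (j : ℕ) ∧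
          r = FreeGroup.of i * FreeGroup.of j * (FreeGroup.of j * FreeGroup.of i)⁻¹) }

/-- The braid group on `n` strands, presented by `n-1` generators and the braid relations. -/
abbrev BraidGroup (n : ℕ) : Type := PresentedGroup (braidRels (n - 1))

/-- The braid group on three strands. -/
abbrev B3 : Type := BraidGroup 3

/-- The standard generators of `B3`. -/
def b3 (i : Fin 2) : B3 := PresentedGroup.of i

/-- `S` is the Burau specialization of `B3` at the real parameter `t₀`. -/
def IsBurau3 (t₀ : ℝ) (S : B3 →* GL (Fin 2) ℝ) : Prop :=
  (S (b3 0) : Matrix (Fin 2) (Fin 2) ℝ) = !![-t₀, 1; 0, 1] ∧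
  (S (b3 1) : Matrix (Fin 2) (Fin 2) ℝ) = !![1, 0; t₀, -t₀]

/-- The braid group on four strands. -/
abbrev B4 : Type := BraidGroup 4

/-- The standard generators of `B4`. -/
def b4 (i : Fin 3) : B4 := PresentedGroup.of i

/-- `S` is the Burau specialization of `B4` at the real parameter `t₀`. -/
def IsBurau4 (t₀ : ℝ) (S : B4 →* GL (Fin 3) ℝ) : Prop :=
  (S (b4 0) : Matrix (Fin 3) (Fin 3) ℝ) = !![-t₀, 1, 0; 0, 1, 0; 0, 0, 1] ∧
  (S (b4 1) : Matrix (Fin 3) (Fin 3) ℝ) = !![1, 0, 0; t₀, -t₀, 1; 0, 0, 1] ∧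
  (S (b4 2) : Matrix (Fin 3) (Fin 3) ℝ) = !![1, 0, 0; 0, 1, 0; 0, t₀, -t₀]

/-! The assignment `σ₁, σ₂ ↦ σ₁, σ₂` embeds `B₃` in `B₄`, since `σ₁, σ₂, σ₃ ↦ σ₁, σ₂, σ₁` is a
retraction. On this copy of `B₃`, the Burau specialization `S⁴_η` is conjugate to `S_η ⊕ 1`, so a
nontrivial element of the kernel of `S_η` maps to a nontrivial element of the kernel of `S⁴_η`. -/

namespace BraidGroup

variable {m : ℕ}

lemma of_mul_of_mul_of {i j : Fin m} (hij : (i : ℕ) + 1 = j) :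
    (PresentedGroup.of i * PresentedGroup.of j * PresentedGroup.of i : PresentedGroup (braidRels m))
      = PresentedGroup.of j * PresentedGroup.of i * PresentedGroup.of j :=
  PresentedGroup.mk_eq_mk_of_mul_inv_mem (Or.inl ⟨i, j, hij, rfl⟩)

lemma lift_eq_one_of_mem_braidRels {G : Type*} [Group G] {f : Fin m → G}
    (hbraid : ∀ i j : Fin m, (i : ℕ) + 1 = j → f i * f j * f i = f j * f i * f j)
    (hcomm : ∀ i j : Fin m, (i : ℕ) + 2 ≤ j → f i * f j = f j * f i) :
    ∀ r ∈ braidRels m, FreeGroup.lift f r = 1 := by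
  rintro r (⟨i, j, hij, rfl⟩ | ⟨i, j, hij, rfl⟩) <;>
    simp only [map_mul, map_inv, FreeGroup.lift_apply_of, mul_inv_eq_one]
  exacts [hbraid i j hij, hcomm i j hij]

end BraidGroup

lemma b3_braid : b3 0 * b3 1 * b3 0 = b3 1 * b3 0 * b3 1 :=
  BraidGroup.of_mul_of_mul_of (m := 2) rfl

lemma b4_braid : b4 0 * b4 1 * b4 0 = b4 1 * b4 0 * b4 1 :=
  BraidGroup.of_mul_of_mul_of (m := 3) rfl

def B3.toB4 : B3 →* B4 :=
  PresentedGroup.toGroup (f := ![b4 0, b4 1]) <| BraidGroup.lift_eq_one_of_mem_braidRels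
    (fun i j hij => by fin_cases i <;> fin_cases j <;> simp_all [b4_braid])
    (fun i j hij => by omega)

def B4.toB3 : B4 →* B3 :=
  PresentedGroup.toGroup (f := ![b3 0, b3 1, b3 0]) <| BraidGroup.lift_eq_one_of_mem_braidRels
    (fun i j hij => by fin_cases i <;> fin_cases j <;> simp_all [b3_braid])
    (fun i j hij => by fin_cases i <;> fin_cases j <;> simp_all)

lemma B3.toB4_b3 (i : Fin 2) : B3.toB4 (b3 i) = b4 i.castSucc := by
  fin_cases i <;> rfl

lemma B4.toB3_comp_toB4 : B4.toB3.comp B3.toB4 = MonoidHom.id B3 := by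
  refine PresentedGroup.ext fun i => ?_
  fin_cases i <;> rfl

lemma B3.toB4_injective : Function.Injective B3.toB4 :=
  Function.LeftInverse.injective (g := B4.toB3) (DFunLike.congr_fun B4.toB3_comp_toB4)

namespace Matrix

variable {R : Type*} [Semiring R]

def extendByOne : Matrix (Fin 2) (Fin 2) R →* Matrix (Fin 3) (Fin 3) R where
  toFun A := !![A 0 0, A 0 1, 0; A 1 0, A 1 1, 0; 0, 0, 1]
  map_one' := by ext i j; fin_cases i <;> fin_cases j <;> rfl
  map_mul' A B := by
    ext i j
    fin_cases i <;> fin_cases j <;> simp [mul_apply, Fin.sum_univ_succ]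

end Matrix

/- The third column is a common fixed vector of `S⁴(σ₁)` and `S⁴(σ₂)`, complementing the plane
spanned by `e₁, e₂`, which they preserve. -/
noncomputable def burauIntertwiner (t : ℝ) : GL (Fin 3) ℝ :=
  Matrix.GeneralLinearGroup.mkOfDetNeZero !![1, 0, 1; 0, 1, 1 + t; 0, 0, t ^ 2 + t + 1] <| by
    simp only [Matrix.det_fin_three, Matrix.of_apply, Matrix.cons_val, Matrix.cons_val_zero,
      Matrix.cons_val_one]
    nlinarith [sq_nonneg (2 * t + 1)]

lemma burauIntertwiner_mul_extendByOne_gen0 (t : ℝ) :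
    (burauIntertwiner t : Matrix (Fin 3) (Fin 3) ℝ) * Matrix.extendByOne !![-t, 1; 0, 1]
      = !![-t, 1, 0; 0, 1, 0; 0, 0, 1] * burauIntertwiner t := by
  ext i j
  fin_cases i <;> fin_cases j <;>
    simp [burauIntertwiner, Matrix.extendByOne, Matrix.mul_apply, Fin.sum_univ_succ]

lemma burauIntertwiner_mul_extendByOne_gen1 (t : ℝ) :
    (burauIntertwiner t : Matrix (Fin 3) (Fin 3) ℝ) * Matrix.extendByOne !![1, 0; t, -t]
      = !![1, 0, 0; t, -t, 1; 0, 0, 1] * burauIntertwiner t := by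
  ext i j
  fin_cases i <;> fin_cases j <;>
    simp [burauIntertwiner, Matrix.extendByOne, Matrix.mul_apply, Fin.sum_univ_succ]
  ring

lemma MulAut.conj_apply_eq_iff_mul_eq {G : Type*} [Group G] {p x y : G} :
    MulAut.conj p x = y ↔ p * x = y * p := by
  rw [MulAut.conj_apply, mul_inv_eq_iff_eq_mul]

lemma burau4_comp_toB4 {t : ℝ} {S₃ : B3 →* GL (Fin 2) ℝ} {S₄ : B4 →* GL (Fin 3) ℝ}
    (hS₃ : IsBurau3 t S₃) (hS₄ : IsBurau4 t S₄) :
    (MulAut.conj (burauIntertwiner t)).toMonoidHom.comp ((Units.map Matrix.extendByOne).comp S₃)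
      = S₄.comp B3.toB4 := by
  refine PresentedGroup.ext fun i => ?_
  show MulAut.conj _ (Units.map _ (S₃ (b3 i))) = S₄ (B3.toB4 (b3 i))
  rw [MulAut.conj_apply_eq_iff_mul_eq, B3.toB4_b3, Units.ext_iff, Units.val_mul, Units.val_mul,
    Units.coe_map]
  fin_cases i
  · rw [Fin.zero_eta, hS₃.1, Fin.castSucc_zero, hS₄.1]
    exact burauIntertwiner_mul_extendByOne_gen0 t
  · rw [Fin.mk_one, hS₃.2, Fin.castSucc_one, hS₄.2.1]
    exact burauIntertwiner_mul_extendByOne_gen1 t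

theorem burau_B4_unfaithful_of_B3_kernel_general (η : ℝ)
    (S₃ : B3 →* GL (Fin 2) ℝ) (hS₃ : IsBurau3 η S₃)
    (S₄ : B4 →* GL (Fin 3) ℝ) (hS₄ : IsBurau4 η S₄)
    (hker_nt : S₃.ker ≠ ⊥) :
    ¬ Function.Injective S₄ := by
  intro hS₄_inj
  refine hker_nt ((MonoidHom.ker_eq_bot_iff S₃).mpr fun x y hxy => B3.toB4_injective (hS₄_inj ?_))
  rw [← MonoidHom.comp_apply, ← MonoidHom.comp_apply, ← burau4_comp_toB4 hS₃ hS₄]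
  simp only [MonoidHom.comp_apply, hxy]

theorem burau_B4_unfaithful_of_B3_kernel (η : ℝ) (hη : η ≠ 0)
    (S₃ : B3 →* GL (Fin 2) ℝ) (hS₃ : IsBurau3 η S₃)
    (S₄ : B4 →* GL (Fin 3) ℝ) (hS₄ : IsBurau4 η S₄)
    (hker_nt : S₃.ker ≠ ⊥) (hker_nc : ¬ S₃.ker ≤ Subgroup.center B3) :
    ¬ Function.Injective S₄ :=
  burau_B4_unfaithful_of_B3_kernel_general η S₃ hS₃ S₄ hS₄ hker_nt
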